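/- arXiv:2510.17230 — 2 statements merged into one kernel-verified Lean document; each statement's English description precedes it below -/
import Mathlib

section
/- Let (M,ω) be a closed symplectic manifold with a Hamiltonian S^1-action whose Hamiltonian H satisfies, for each fixed component F, H(F) = −(sum of weights at F). Suppose b_2(M) = 1 so the Kirwan identity b_2(M) = Σ_F b_{2−2λ_F}(F) holds, where λ_F is half the Morse-Bott index of H on F, and suppose dim(M_min) > 0. Then no fixed component F other than M_min has λ_F = 1. -/
/- STATEMENT 14: For a closed symplectic manifold with a Hamiltonian S¹-action,
b₂(M) = 1, normalized Hamiltonian, and dim(M_min) > 0, no fixed component other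
than M_min has λ_F = 1.

The fixed components are indexed by a finite type ι, with Betti numbers
b i : ℤ → ℕ (vanishing in negative degrees), Morse–Bott half-indices lam i, the
minimum m having lam m = 0 and b₂(M_min) ≥ 1 (M_min is a positive-dimensional
connected symplectic manifold), each component connected (b₀ = 1 ≥ 1), and the
Kirwan identity b₂(M) = Σ_F b_{2−2λ_F}(F) = 1. -/
theorem stmt_14 (ι : Type) [Fintype ι]
    (b : ι → ℤ → ℕ) (lam : ι → ℕ) (m : ι)
    (hneg : ∀ i (j : ℤ), j < 0 → b i j = 0)
    (hm : lam m = 0)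
    (hb2m : 1 ≤ b m 2)          -- dim(M_min) > 0 gives b₂(M_min) ≥ 1
    (hb0 : ∀ i, 1 ≤ b i 0)      -- each fixed component is connected
    (hKirwan : ∑ i, b i (2 - 2 * (lam i : ℤ)) = 1) :
    ∀ i, i ≠ m → lam i ≠ 1 := by
  classical
  intro i hi hlam
  have h1 : b m (2 - 2 * (lam m : ℤ)) = b m 2 := by rw [hm]; norm_num
  have h2 : b i (2 - 2 * (lam i : ℤ)) = b i 0 := by rw [hlam]; norm_num
  have hle : b m (2 - 2 * (lam m : ℤ)) + b i (2 - 2 * (lam i : ℤ)) ≤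
      ∑ j, b j (2 - 2 * (lam j : ℤ)) := by
    have := Finset.add_sum_erase Finset.univ (fun j => b j (2 - 2 * (lam j : ℤ)))
      (Finset.mem_univ m)
    rw [← this]
    have hi' : i ∈ Finset.univ.erase m := Finset.mem_erase.mpr ⟨hi, Finset.mem_univ i⟩
    exact add_le_add le_rfl (Finset.single_le_sum (f := fun j => b j (2 - 2 * (lam j : ℤ))) (fun j _ => Nat.zero_le _) hi')
  rw [h1, h2, hKirwan] at hle
  have := hb0 i
  omega
end

section
/- Let M be a closed symplectic 8-manifold with b_2(M) = 1 and a Hamiltonian S^1-action such that dim(M_max) = 6. Then there is no such manifold with dim(M_min) ∈ {2, 4, 6}: the Kirwan identity b_2(M) = b_2(M_min) + b_0(M_max) + (nonnegative terms) gives b_2(M) ≥ 2, a contradiction. -/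
/- STATEMENT 15: There is no closed symplectic 8-manifold M with b₂(M) = 1 and a
Hamiltonian S¹-action with dim(M_max) = 6 and dim(M_min) ∈ {2,4,6}: the Kirwan
identity b₂(M) = Σ_F b_{2−2λ_F}(F) would give b₂(M) ≥ b₂(M_min) + b₀(M_max) ≥ 2.

The fixed components are indexed by a finite type ι, with Betti numbers
b i : ℤ → ℕ, half-indices lam i, λ(M_min) = 0, λ(M_max) = (8−6)/2 = 1,
b₂(M_min) ≥ 1 (M_min is positive-dimensional connected symplectic) and
b₀(M_max) ≥ 1 (connected). -/
theorem stmt_15 (ι : Type) [Fintype ι]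
    (b : ι → ℤ → ℕ) (lam : ι → ℕ) (mmin mmax : ι)
    (hne : mmin ≠ mmax)
    (hmin : lam mmin = 0) (hmax : lam mmax = 1)
    (hb2min : 1 ≤ b mmin 2)     -- dim(M_min) ∈ {2,4,6} gives b₂(M_min) ≥ 1
    (hb0max : 1 ≤ b mmax 0)     -- M_max connected
    (hKirwan : ∑ i, b i (2 - 2 * (lam i : ℤ)) = 1) :
    False := by
  classical
  have h : b mmin (2 - 2 * (lam mmin : ℤ)) + b mmax (2 - 2 * (lam mmax : ℤ)) ≤
      ∑ i, b i (2 - 2 * (lam i : ℤ)) := by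
    have := Finset.sum_le_sum_of_subset (f := fun i => b i (2 - 2 * (lam i : ℤ)))
      (Finset.subset_univ {mmin, mmax})
    rwa [Finset.sum_pair hne] at this
  rw [hmin, hmax] at h
  norm_num at h
  omega
end
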